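/- arXiv:1605.01497 — 2 statements merged into one kernel-verified Lean document; each statement's English description precedes it below -/
import Mathlib

section
/- Let α be a type and define two operations on lists over α: s(l) swaps the first two elements of l (and is the identity on lists of length < 2), and r(l) moves the head of l to the end (and is the identity on the empty list). Then for every list w : List α and every list w' that is a permutation of w, w' can be obtained from w by a finite sequence of applications of s and r. -/
def swapFirstTwo {α : Type*} : List α → List α
  | a :: b :: t => b :: a :: t
  | l => l

def rotateHead {α : Type*} : List α → List α
  | [] => []
  | a :: t => t ++ [a]

section Aux

variable {α : Type*}

/-- Semantic reachability: `w'` lies in every set containing `w` that is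
closed under `swapFirstTwo` and `rotateHead`. -/
def Reach (w w' : List α) : Prop :=
  ∀ S : Set (List α), w ∈ S → (∀ l ∈ S, swapFirstTwo l ∈ S) →
    (∀ l ∈ S, rotateHead l ∈ S) → w' ∈ S

lemma Reach.refl (w : List α) : Reach w w := fun _ hw _ _ => hw

lemma Reach.trans {a b c : List α} (h1 : Reach a b) (h2 : Reach b c) : Reach a c :=
  fun S hS hs hr => h2 S (h1 S hS hs hr) hs hr

lemma reach_swap (l : List α) : Reach l (swapFirstTwo l) :=
  fun S hS hs _ => hs l hS

lemma reach_rot (l : List α) : Reach l (rotateHead l) :=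
  fun S hS _ hr => hr l hS

lemma rotateHead_eq_rotate (l : List α) : rotateHead l = l.rotate 1 := by
  cases l with
  | nil => simp [rotateHead]
  | cons a t => simp [rotateHead, List.rotate_cons_succ]

lemma reach_rotate (l : List α) (n : ℕ) : Reach l (l.rotate n) := by
  induction n with
  | zero => simpa using Reach.refl l
  | succ k ih =>
      have h : l.rotate (k + 1) = rotateHead (l.rotate k) := by
        rw [rotateHead_eq_rotate, List.rotate_rotate]
      rw [h]
      exact ih.trans (reach_rot _)

/-- A rotation can be undone by rotating all the way around. -/
lemma reach_unrot (l : List α) : Reach (rotateHead l) l := by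
  cases l with
  | nil => exact Reach.refl _
  | cons a t =>
      have key : (rotateHead (a :: t)).rotate ((a :: t).length - 1) = a :: t := by
        rw [rotateHead_eq_rotate, List.rotate_rotate]
        have h1 : 1 + ((a :: t).length - 1) = (a :: t).length := by simp [Nat.add_comm]
        rw [h1, List.rotate_length]
      have h := reach_rotate (rotateHead (a :: t)) ((a :: t).length - 1)
      rwa [key] at h

/-- Rotating the tail while keeping the head fixed. -/
lemma reach_cons_rot (a : α) (t : List α) : Reach (a :: t) (a :: rotateHead t) := by
  cases t with
  | nil => exact Reach.refl _
  | cons b rest =>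
      have h1 : Reach (a :: b :: rest) (b :: a :: rest) := reach_swap _
      have h2 : Reach (b :: a :: rest) (a :: rest ++ [b]) := reach_rot _
      simpa [rotateHead] using h1.trans h2

/-- Swapping the first two elements of the tail while keeping the head fixed. -/
lemma reach_cons_swap (a : α) (t : List α) : Reach (a :: t) (a :: swapFirstTwo t) := by
  match t with
  | [] => exact Reach.refl _
  | [b] => exact Reach.refl _
  | b :: c :: rest =>
      have h1 : Reach (a :: b :: c :: rest) (b :: c :: rest ++ [a]) := reach_rot _
      have h2 : Reach (b :: c :: rest ++ [a]) (c :: b :: rest ++ [a]) := reach_swap _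
      have h3 : Reach (rotateHead (a :: c :: b :: rest)) (a :: c :: b :: rest) :=
        reach_unrot _
      have h4 : rotateHead (a :: c :: b :: rest) = c :: b :: rest ++ [a] := by
        simp [rotateHead]
      rw [h4] at h3
      exact (h1.trans h2).trans h3

/-- Reachability is preserved under consing a fixed head. -/
lemma Reach.cons {t t' : List α} (a : α) (h : Reach t t') : Reach (a :: t) (a :: t') := by
  have := h {x | Reach (a :: t) (a :: x)} (Reach.refl _)
    (fun l hl => hl.trans (reach_cons_swap a l))
    (fun l hl => hl.trans (reach_cons_rot a l))
  exact this

lemma reach_of_perm {l l' : List α} (h : l.Perm l') : Reach l l' := by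
  induction h with
  | nil => exact Reach.refl _
  | cons a _ ih => exact ih.cons a
  | swap a b l => exact reach_swap (b :: a :: l)
  | trans _ _ ih1 ih2 => exact ih1.trans ih2

end Aux

theorem stmt_1 {α : Type*} (w w' : List α) (hperm : w'.Perm w)
    (S : Set (List α)) (hw : w ∈ S)
    (hs : ∀ l ∈ S, swapFirstTwo l ∈ S)
    (hr : ∀ l ∈ S, rotateHead l ∈ S) :
    w' ∈ S :=
  reach_of_perm hperm.symm S hw hs hr
end

section
/- Let n ≥ 1 and c₀ : ℤ, c : Fin n → ℤ. If there exists i with c i ≠ 0, then there exists a strictly increasing function d : Fin n → ℤ such that c₀ + ∑ i, c i * d i ≠ 0. -/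
theorem stmt_11 (n : ℕ) (hn : 1 ≤ n) (c₀ : ℤ) (c : Fin n → ℤ)
    (h : ∃ i, c i ≠ 0) :
    ∃ d : Fin n → ℤ, StrictMono d ∧ c₀ + ∑ i, c i * d i ≠ 0 := by
  classical
  set s : Finset (Fin n) := Finset.univ.filter (fun i => c i ≠ 0) with hs
  have hne : s.Nonempty := by
    obtain ⟨i, hi⟩ := h
    exact ⟨i, by simp [hs, hi]⟩
  set j := s.max' hne with hj
  have hcj : c j ≠ 0 := by
    have := s.max'_mem hne
    simpa [hs] using this
  have hmax : ∀ b : Fin n, j < b → c b = 0 := by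
    intro b hb
    by_contra hcb
    have hbs : b ∈ s := by simp [hs, hcb]
    exact absurd (s.le_max' b hbs) (not_le.mpr hb)
  -- key sum lemma
  have key : ∀ t : ℤ, c₀ + ∑ i, c i * ((i : ℤ) + if j ≤ i then t else 0)
      = (c₀ + ∑ i, c i * (i : ℤ)) + c j * t := by
    intro t
    have h1 : ∑ i, c i * ((i : ℤ) + if j ≤ i then t else 0)
        = ∑ i, (c i * (i : ℤ) + c i * (if j ≤ i then t else 0)) := by
      apply Finset.sum_congr rfl
      intro i _
      ring
    rw [h1, Finset.sum_add_distrib]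
    have h2 : ∑ i, c i * (if j ≤ i then t else 0) = c j * t := by
      rw [Finset.sum_eq_single j]
      · simp
      · intro b _ hbj
        rcases le_or_gt j b with hle | hlt
        · have : j < b := lt_of_le_of_ne hle (Ne.symm hbj)
          simp [hmax b this]
        · simp [not_le.mpr hlt]
      · intro hj'; exact absurd (Finset.mem_univ j) hj'
    rw [h2]; ring
  have mono : ∀ t : ℤ, 0 ≤ t → StrictMono (fun i : Fin n => (i : ℤ) + if j ≤ i then t else 0) := by
    intro t ht a b hab
    have hab' : (a : ℤ) < (b : ℤ) := by exact_mod_cast hab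
    simp only
    rcases le_or_gt j a with hja | hja
    · have hjb : j ≤ b := hja.trans hab.le
      simp [hja, hjb]; omega
    · rcases le_or_gt j b with hjb | hjb
      · simp [not_le.mpr hja, hjb]; omega
      · simp [not_le.mpr hja, not_le.mpr hjb]; omega
  set K := c₀ + ∑ i, c i * (i : ℤ) with hK
  by_cases hK0 : K = 0
  · refine ⟨fun i => (i : ℤ) + if j ≤ i then 1 else 0, mono 1 zero_le_one, ?_⟩
    rw [key 1, hK0]
    simpa using hcj
  · refine ⟨fun i => (i : ℤ) + if j ≤ i then 0 else 0, mono 0 le_rfl, ?_⟩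
    rw [key 0]
    simpa using hK0
end
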